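/- If a graph G is 2-edge-connected and |V(G)| > 3k + 1, then G is not k-contractible to any path. -/
import Mathlib


open SimpleGraph

/-- Contraction of the edge `uv` in `G`: remove `v`, attaching its former
neighbours to `u`. -/
def SimpleGraph.contractEdge {V : Type} (G : SimpleGraph V) (u v : V) :
    SimpleGraph {x : V // x ≠ v} :=
  SimpleGraph.fromRel (fun a b =>
    G.Adj a.1 b.1 ∨ (a.1 = u ∧ G.Adj v b.1) ∨ (b.1 = u ∧ G.Adj v a.1))

/-- `ContractsIn G H n` : `H` is obtained from `G` by exactly `n` edge contractions. -/
inductive ContractsIn : {V : Type} → SimpleGraph V → {W : Type} → SimpleGraph W → ℕ → Prop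
  | iso {V : Type} {G : SimpleGraph V} {W : Type} {H : SimpleGraph W} :
      Nonempty (G ≃g H) → ContractsIn G H 0
  | step {V : Type} {G : SimpleGraph V} (u v : V) (huv : G.Adj u v)
      {W : Type} {H : SimpleGraph W} {n : ℕ} :
      ContractsIn (G.contractEdge u v) H n → ContractsIn G H (n + 1)

/-- `G` is contractible to `H`. -/
def ContractibleTo {V W : Type} (G : SimpleGraph V) (H : SimpleGraph W) : Prop :=
  ∃ n, ContractsIn G H n

/-- `G` is `k`-contractible to `H` : `H` arises from `G` by at most `k` edge contractions. -/
def KContractible {V W : Type} (G : SimpleGraph V) (H : SimpleGraph W) (k : ℕ) : Prop :=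
  ∃ n ≤ k, ContractsIn G H n

/-- An `H`-witness structure of `G`. -/
structure IsWitnessStructure {V W : Type} (G : SimpleGraph V) (H : SimpleGraph W)
    (Wit : W → Set V) : Prop where
  connected : ∀ h, (G.induce (Wit h)).Connected
  adj : ∀ h₁ h₂ : W, h₁ ≠ h₂ →
    (H.Adj h₁ h₂ ↔ ∃ a ∈ Wit h₁, ∃ b ∈ Wit h₂, G.Adj a b)
  cover : ∀ v : V, ∃ h, v ∈ Wit h
  disjoint : ∀ h₁ h₂ : W, h₁ ≠ h₂ → Disjoint (Wit h₁) (Wit h₂)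

/-- `P` is a path graph. -/
def IsPathGraph {W : Type} (P : SimpleGraph W) : Prop :=
  ∃ n, Nonempty (P ≃g SimpleGraph.pathGraph n)

/-- `C` is a cycle graph (on at least 3 vertices). -/
def IsCycleGraph {W : Type} (C : SimpleGraph W) : Prop :=
  ∃ n, 3 ≤ n ∧ Nonempty (C ≃g SimpleGraph.cycleGraph n)

/-- `G` is 2-edge-connected. -/
def TwoEdgeConnected {V : Type} (G : SimpleGraph V) : Prop :=
  G.Connected ∧ ∀ e ∈ G.edgeSet, (G.deleteEdges {e}).Connected

/-- `G` is 2-connected. -/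
def TwoConnected {V : Type} (G : SimpleGraph V) : Prop :=
  G.Connected ∧ 3 ≤ Nat.card V ∧ ∀ v : V, (G.induce {u | u ≠ v}).Connected

/-- `C₁` and `C₂` are (exactly the) two connected components of `G - {x, y}`. -/
def TwoComponents {V : Type} (G : SimpleGraph V) (x y : V) (C₁ C₂ : Set V) : Prop :=
  Disjoint C₁ C₂ ∧ C₁ ∪ C₂ = {v | v ≠ x ∧ v ≠ y} ∧
  C₁.Nonempty ∧ C₂.Nonempty ∧
  (G.induce C₁).Connected ∧ (G.induce C₂).Connected ∧
  ∀ a ∈ C₁, ∀ b ∈ C₂, ¬ G.Adj a b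

/-- `C` is an optimal (longest) cycle to which `G` can be contracted. -/
def OptimalCycle {V W : Type} (G : SimpleGraph V) (C : SimpleGraph W) : Prop :=
  IsCycleGraph C ∧ ContractibleTo G C ∧
  ∀ (W' : Type) (C' : SimpleGraph W'), IsCycleGraph C' → ContractibleTo G C' →
    Nat.card W' ≤ Nat.card W

/-- `G` can be contracted to a path, with `a` in one endpoint witness set and `b` in
the other, using at most `k` edge contractions. -/
def PathContractFixed {V : Type} (G : SimpleGraph V) (a b : V) (k : ℕ) : Prop :=
  ∃ (n : ℕ) (Wit : Fin (n + 1) → Set V),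
    IsWitnessStructure G (SimpleGraph.pathGraph (n + 1)) Wit ∧
    Nat.card V ≤ (n + 1) + k ∧
    ((a ∈ Wit 0 ∧ b ∈ Wit (Fin.last n)) ∨ (a ∈ Wit (Fin.last n) ∧ b ∈ Wit 0))

section Aux

/-- crossing lemma: a walk from a `P`-vertex to a non-`P`-vertex crosses. -/
lemma cross_lemma {V : Type} (G' : SimpleGraph V) (P : V → Prop) :
    ∀ {x y : V}, G'.Walk x y → P x → ¬ P y → ∃ c d, G'.Adj c d ∧ P c ∧ ¬ P d := by
  intro x y w
  induction w with
  | nil => exact fun h h' => absurd h h'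
  | @cons a b c h q ih =>
      intro hx hy
      by_cases hm : P b
      · exact ih hm hy
      · exact ⟨a, b, h, hx, hm⟩

lemma witness_of_iso {V W W' : Type} (G : SimpleGraph V) {H : SimpleGraph W}
    {H' : SimpleGraph W'} (e : H ≃g H') {Wit : W → Set V}
    (hw : IsWitnessStructure G H Wit) :
    IsWitnessStructure G H' (fun w => Wit (e.symm w)) where
  connected h := hw.connected _
  adj h₁ h₂ hne := by
    have hne' : e.symm h₁ ≠ e.symm h₂ := fun hcon => hne (by
      have := congrArg e hcon
      simpa using this)
    exact (e.symm.map_adj_iff).symm.trans (hw.adj _ _ hne')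
  cover x := by
    obtain ⟨h, hh⟩ := hw.cover x
    exact ⟨e h, by simpa using hh⟩
  disjoint h₁ h₂ hne := hw.disjoint _ _ (fun hcon => hne (by
    have := congrArg e hcon
    simpa using this))

lemma witness_self {V W : Type} {G : SimpleGraph V} {H : SimpleGraph W} (e : G ≃g H) :
    IsWitnessStructure G H (fun w => {e.symm w}) where
  connected h := by
    haveI : Nonempty ↥({e.symm h} : Set V) := ⟨⟨e.symm h, rfl⟩⟩
    refine ⟨fun x y => ?_⟩
    have : x = y := Subtype.ext (x.2.trans y.2.symm)
    exact this ▸ Reachable.refl _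
  adj h₁ h₂ hne := by
    constructor
    · intro h
      exact ⟨e.symm h₁, rfl, e.symm h₂, rfl, (e.symm.map_adj_iff).mpr h⟩
    · rintro ⟨a, rfl, b, rfl, hab⟩
      exact (e.symm.map_adj_iff).mp hab
  cover x := ⟨e x, by simp⟩
  disjoint h₁ h₂ hne := by
    have : e.symm h₁ ≠ e.symm h₂ := fun hcon => hne (by
      have := congrArg e hcon
      simpa using this)
    simpa [Set.disjoint_singleton_left] using this

end Aux
lemma contractEdge_adj {V : Type} (G : SimpleGraph V) (u v : V) (a b : {x : V // x ≠ v}) :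
    (G.contractEdge u v).Adj a b ↔
      a ≠ b ∧ (G.Adj a.1 b.1 ∨ (a.1 = u ∧ G.Adj v b.1) ∨ (b.1 = u ∧ G.Adj v a.1)) := by
  rw [SimpleGraph.contractEdge, SimpleGraph.fromRel_adj]
  constructor
  · rintro ⟨hne, h | h⟩
    · exact ⟨hne, h⟩
    · refine ⟨hne, ?_⟩
      rcases h with h | h | h
      · exact Or.inl h.symm
      · exact Or.inr (Or.inr h)
      · exact Or.inr (Or.inl h)
  · rintro ⟨hne, h⟩
    exact ⟨hne, Or.inl h⟩

lemma witness_step {V : Type} {G : SimpleGraph V} {u v : V} (huv : G.Adj u v)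
    {W : Type} {H : SimpleGraph W} {Wit' : W → Set {x : V // x ≠ v}}
    (hw : IsWitnessStructure (G.contractEdge u v) H Wit') :
    ∃ Wit : W → Set V, IsWitnessStructure G H Wit := by
  have hu : u ≠ v := huv.ne
  set u' : {x : V // x ≠ v} := ⟨u, hu⟩ with hu'def
  set Wit : W → Set V :=
    (fun w => Subtype.val '' Wit' w ∪ {x | x = v ∧ u' ∈ Wit' w}) with hWdef
  -- membership facts
  have hmem : ∀ (w) (x : V) (hx : x ≠ v), x ∈ Wit w ↔ ⟨x, hx⟩ ∈ Wit' w := by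
    intro w x hx
    constructor
    · rintro (⟨y, hy, rfl⟩ | ⟨rfl, _⟩)
      · have : (⟨y.1, hx⟩ : {x : V // x ≠ v}) = y := Subtype.ext rfl
        rw [this]; exact hy
      · exact absurd rfl hx
    · intro h
      exact Or.inl ⟨⟨x, hx⟩, h, rfl⟩
  have hvmem : ∀ w, v ∈ Wit w ↔ u' ∈ Wit' w := by
    intro w
    constructor
    · rintro (⟨y, hy, hyv⟩ | ⟨_, h⟩)
      · exact absurd hyv y.2
      · exact h
    · intro h
      exact Or.inr ⟨rfl, h⟩
  have hval : ∀ (w) (a : ↥(Wit' w)), a.1.1 ∈ Wit w := fun w a => Or.inl ⟨a.1, a.2, rfl⟩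
  refine ⟨Wit, ?_, ?_, ?_, ?_⟩
  · -- connected
    intro w
    set κ : ↥(Wit' w) → ↥(Wit w) := (fun a => ⟨a.1.1, hval w a⟩) with hκ
    have key : ∀ a b : ↥(Wit' w),
        ((G.contractEdge u v).induce (Wit' w)).Reachable a b →
        (G.induce (Wit w)).Reachable (κ a) (κ b) := by
      intro a b h
      obtain ⟨p⟩ := h
      induction p with
      | nil => exact Reachable.refl _
      | @cons x y z hadj q ih =>
          refine Reachable.trans ?_ ih
          have hadj' := (contractEdge_adj G u v x.1 y.1).mp (comap_adj.mp hadj)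
          rcases hadj'.2 with h | ⟨hxu, hvy⟩ | ⟨hyu, hvx⟩
          · exact (SimpleGraph.Adj.reachable (comap_adj.mpr h :
              (G.induce (Wit w)).Adj (κ x) (κ y)))
          · -- x is u, so v is in Wit w; go x = u — v — y
            have hu'w : u' ∈ Wit' w := by
              have : (x.1 : {t : V // t ≠ v}) = u' := Subtype.ext hxu
              rw [← this]; exact x.2
            have hvw : v ∈ Wit w := (hvmem w).mpr hu'w
            have h1 : (G.induce (Wit w)).Adj (κ x) ⟨v, hvw⟩ := by
              refine comap_adj.mpr ?_
              show G.Adj x.1.1 v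
              rw [hxu]; exact huv
            have h2 : (G.induce (Wit w)).Adj ⟨v, hvw⟩ (κ y) := comap_adj.mpr hvy
            exact h1.reachable.trans h2.reachable
          · have hu'w : u' ∈ Wit' w := by
              have : (y.1 : {t : V // t ≠ v}) = u' := Subtype.ext hyu
              rw [← this]; exact y.2
            have hvw : v ∈ Wit w := (hvmem w).mpr hu'w
            have h1 : (G.induce (Wit w)).Adj (κ x) ⟨v, hvw⟩ := comap_adj.mpr hvx.symm
            have h2 : (G.induce (Wit w)).Adj ⟨v, hvw⟩ (κ y) := by
              refine comap_adj.mpr ?_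
              show G.Adj v y.1.1
              rw [hyu]; exact huv.symm
            exact h1.reachable.trans h2.reachable
    have hne' : Nonempty ↥(Wit' w) := (hw.connected w).nonempty
    obtain ⟨a0⟩ := hne'
    haveI : Nonempty ↥(Wit w) := ⟨κ a0⟩
    have hstep : ∀ x : ↥(Wit w), ∃ a : ↥(Wit' w), (G.induce (Wit w)).Reachable x (κ a) := by
      intro x
      rcases x.2 with h | ⟨hxv, hu'w⟩
      · obtain ⟨a, ha, hax⟩ := h
        refine ⟨⟨a, ha⟩, ?_⟩
        have : κ ⟨a, ha⟩ = x := Subtype.ext hax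
        rw [this]
      · refine ⟨⟨u', hu'w⟩, ?_⟩
        have : (G.induce (Wit w)).Adj x (κ ⟨u', hu'w⟩) := by
          refine comap_adj.mpr ?_
          show G.Adj x.1 u
          rw [hxv]; exact huv.symm
        exact this.reachable
    refine ⟨fun x y => ?_⟩
    obtain ⟨ax, hax⟩ := hstep x
    obtain ⟨ay, hay⟩ := hstep y
    exact (hax.trans (key ax ay ((hw.connected w).preconnected ax ay))).trans hay.symm
  · -- adj
    intro h₁ h₂ hne
    rw [hw.adj h₁ h₂ hne]
    constructor
    · rintro ⟨a', ha', b', hb', hab⟩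
      rcases ((contractEdge_adj G u v a' b').mp hab).2 with h | ⟨hau, hvb⟩ | ⟨hbu, hva⟩
      · exact ⟨a'.1, Or.inl ⟨a', ha', rfl⟩, b'.1, Or.inl ⟨b', hb', rfl⟩, h⟩
      · have hu'1 : u' ∈ Wit' h₁ := by
          have : a' = u' := Subtype.ext hau
          rw [← this]; exact ha'
        exact ⟨v, (hvmem h₁).mpr hu'1, b'.1, Or.inl ⟨b', hb', rfl⟩, hvb⟩
      · have hu'2 : u' ∈ Wit' h₂ := by
          have : b' = u' := Subtype.ext hbu
          rw [← this]; exact hb'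
        exact ⟨a'.1, Or.inl ⟨a', ha', rfl⟩, v, (hvmem h₂).mpr hu'2, hva.symm⟩
    · rintro ⟨a, ha, b, hb, hab⟩
      by_cases hav : a = v
      · have hab' : G.Adj v b := hav ▸ hab
        have hbv : b ≠ v := fun h => hab.ne (hav.trans h.symm)
        have hu'1 : u' ∈ Wit' h₁ := (hvmem h₁).mp (hav ▸ ha)
        have hb' : (⟨b, hbv⟩ : {x : V // x ≠ v}) ∈ Wit' h₂ := (hmem h₂ b hbv).mp hb
        refine ⟨u', hu'1, ⟨b, hbv⟩, hb', ?_⟩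
        rw [contractEdge_adj]
        refine ⟨?_, Or.inr (Or.inl ⟨rfl, hab'⟩)⟩
        intro hcon
        exact Set.disjoint_left.mp (hw.disjoint h₁ h₂ hne) hu'1 (hcon ▸ hb')
      · by_cases hbv : b = v
        · have hab' : G.Adj v a := (hbv ▸ hab).symm
          have hu'2 : u' ∈ Wit' h₂ := (hvmem h₂).mp (hbv ▸ hb)
          have ha' : (⟨a, hav⟩ : {x : V // x ≠ v}) ∈ Wit' h₁ := (hmem h₁ a hav).mp ha
          refine ⟨⟨a, hav⟩, ha', u', hu'2, ?_⟩
          rw [contractEdge_adj]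
          refine ⟨?_, Or.inr (Or.inr ⟨rfl, hab'⟩)⟩
          intro hcon
          exact Set.disjoint_left.mp (hw.disjoint h₁ h₂ hne) (hcon ▸ ha') hu'2
        · refine ⟨⟨a, hav⟩, (hmem h₁ a hav).mp ha, ⟨b, hbv⟩, (hmem h₂ b hbv).mp hb, ?_⟩
          rw [contractEdge_adj]
          exact ⟨fun hcon => hab.ne (congrArg Subtype.val hcon), Or.inl hab⟩
  · -- cover
    intro x
    by_cases hx : x = v
    · subst hx
      obtain ⟨w, hw'⟩ := hw.cover u'
      exact ⟨w, (hvmem w).mpr hw'⟩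
    · obtain ⟨w, hw'⟩ := hw.cover ⟨x, hx⟩
      exact ⟨w, (hmem w x hx).mpr hw'⟩
  · -- disjoint
    intro h₁ h₂ hne
    rw [Set.disjoint_left]
    intro x hx1 hx2
    by_cases hx : x = v
    · subst hx
      exact Set.disjoint_left.mp (hw.disjoint h₁ h₂ hne) ((hvmem h₁).mp hx1)
        ((hvmem h₂).mp hx2)
    · exact Set.disjoint_left.mp (hw.disjoint h₁ h₂ hne) ((hmem h₁ x hx).mp hx1)
        ((hmem h₂ x hx).mp hx2)
lemma aux_main : ∀ {V : Type} {G : SimpleGraph V} {W : Type} {H : SimpleGraph W} {n : ℕ},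
    ContractsIn G H n → Finite V →
      (∃ Wit : W → Set V, IsWitnessStructure G H Wit) ∧
        (Finite W ∧ Nat.card V = Nat.card W + n) := by
  intro V G W H n h
  induction h with
  | @iso V G W H he =>
      intro hfin
      obtain ⟨e⟩ := he
      exact ⟨⟨fun w => {e.symm w}, witness_self e⟩, Finite.of_equiv V e.toEquiv,
        (Nat.card_congr e.toEquiv).trans (Nat.add_zero _).symm⟩
  | @step V G u v huv W H m hc ih =>
      intro hfin
      obtain ⟨⟨Wit', hw'⟩, hfinW, hcard⟩ := ih inferInstance
      refine ⟨witness_step huv hw', hfinW, ?_⟩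
      have hsub : Nat.card {x : V // x ≠ v} + 1 = Nat.card V := by
        classical
        haveI := Fintype.ofFinite V
        rw [Nat.card_eq_fintype_card, Nat.card_eq_fintype_card]
        have h1 : Fintype.card {x : V // x ≠ v} = Fintype.card V - 1 := by
          have := Fintype.card_subtype_compl (fun x : V => x = v)
          simpa [Fintype.card_subtype_eq] using this
        have h2 : 1 ≤ Fintype.card V := Fintype.card_pos_iff.mpr ⟨v⟩
        omega
      omega

lemma main_comb {V : Type} [Finite V] (G : SimpleGraph V) (r k : ℕ)
    (Wit : Fin r → Set V) (hw : IsWitnessStructure G (SimpleGraph.pathGraph r) Wit)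
    (h2 : TwoEdgeConnected G) (hr : 2 * k + 2 ≤ r) (hcard : Nat.card V ≤ r + k) :
    False := by
  classical
  haveI := Fintype.ofFinite V
  have hlvl : ∀ x : V, ∃ i, x ∈ Wit i := hw.cover
  set lvl : V → Fin r := fun x => (hlvl x).choose with hlvldef
  have hlvlmem : ∀ x : V, x ∈ Wit (lvl x) := fun x => (hlvl x).choose_spec
  have hlvluniq : ∀ (x : V) (i : Fin r), x ∈ Wit i → lvl x = i := by
    intro x i hx
    by_contra hne
    exact Set.disjoint_left.mp (hw.disjoint _ _ hne) (hlvlmem x) hx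
  have hadjlvl : ∀ x y : V, G.Adj x y → lvl x = lvl y ∨
      (lvl x).val + 1 = (lvl y).val ∨ (lvl y).val + 1 = (lvl x).val := by
    intro x y hxy
    by_cases h : lvl x = lvl y
    · exact Or.inl h
    · refine Or.inr (SimpleGraph.pathGraph_adj.mp ?_)
      exact (hw.adj _ _ h).mpr ⟨x, hlvlmem x, y, hlvlmem y, hxy⟩
  set F : Fin r → Finset V := fun i => Finset.univ.filter (fun x => lvl x = i) with hFdef
  have hFsum : ∑ i, (F i).card = Fintype.card V := by
    rw [← Finset.card_univ]
    exact (Finset.card_eq_sum_card_fiberwise (fun x _ => Finset.mem_univ (lvl x))).symm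
  have hFmem : ∀ (x : V) (i : Fin r), x ∈ F i ↔ lvl x = i := by
    intro x i; simp [hFdef]
  have hFpos : ∀ i, 1 ≤ (F i).card := by
    intro i
    obtain ⟨⟨x, hx⟩⟩ := (hw.connected i).nonempty
    exact Finset.card_pos.mpr ⟨x, (hFmem x i).mpr (hlvluniq x i hx)⟩
  set B : Finset (Fin r) := Finset.univ.filter (fun i => 2 ≤ (F i).card) with hBdef
  set S : Finset (Fin r) := Finset.univ.filter (fun i => ¬ 2 ≤ (F i).card) with hSdef
  have hBS : B.card + S.card = r := by
    have := Finset.card_filter_add_card_filter_not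
      (s := (Finset.univ : Finset (Fin r))) (p := fun i => 2 ≤ (F i).card)
    simpa [hBdef, hSdef, Finset.card_univ] using this
  have hBk : B.card ≤ k := by
    have hsplit : ∑ i ∈ B, (F i).card + ∑ i ∈ S, (F i).card = Fintype.card V := by
      rw [← hFsum]
      exact Finset.sum_filter_add_sum_filter_not _ _ _
    have h1 : 2 * B.card ≤ ∑ i ∈ B, (F i).card := by
      calc 2 * B.card = ∑ _i ∈ B, 2 := by rw [Finset.sum_const, smul_eq_mul, mul_comm]
        _ ≤ ∑ i ∈ B, (F i).card :=
          Finset.sum_le_sum (fun i hi => (Finset.mem_filter.mp hi).2)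
    have h2' : S.card ≤ ∑ i ∈ S, (F i).card := by
      calc S.card = ∑ _i ∈ S, 1 := by rw [Finset.sum_const, smul_eq_mul, mul_one]
        _ ≤ ∑ i ∈ S, (F i).card := Finset.sum_le_sum (fun i _ => hFpos i)
    have hVc : Fintype.card V ≤ r + k := by rw [← Nat.card_eq_fintype_card]; exact hcard
    omega
  -- Claim A : no two consecutive singleton fibers
  have hA : ∀ i j : Fin r, (i : ℕ) + 1 = (j : ℕ) → (F i).card = 1 → (F j).card = 1 →
      False := by
    intro i j hij hFi hFj
    obtain ⟨a, ha⟩ := Finset.card_eq_one.mp hFi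
    obtain ⟨b, hb⟩ := Finset.card_eq_one.mp hFj
    have hmema : ∀ x : V, lvl x = i → x = a := fun x hx =>
      Finset.mem_singleton.mp (ha ▸ (hFmem x i).mpr hx)
    have hmemb : ∀ x : V, lvl x = j → x = b := fun x hx =>
      Finset.mem_singleton.mp (hb ▸ (hFmem x j).mpr hx)
    have hla : lvl a = i := (hFmem a i).mp (ha ▸ Finset.mem_singleton_self a)
    have hlb : lvl b = j := (hFmem b j).mp (hb ▸ Finset.mem_singleton_self b)
    have hne : i ≠ j := fun h => by
      have := congrArg Fin.val h; omega
    have hadj : G.Adj a b := by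
      have hpadj : (SimpleGraph.pathGraph r).Adj i j :=
        SimpleGraph.pathGraph_adj.mpr (Or.inl hij)
      obtain ⟨a', ha', b', hb', hab⟩ := (hw.adj i j hne).mp hpadj
      have ha2 : a' = a := hmema a' (hlvluniq a' i ha')
      have hb2 : b' = b := hmemb b' (hlvluniq b' j hb')
      rw [← ha2, ← hb2]; exact hab
    have hconn := h2.2 s(a, b) (G.mem_edgeSet.mpr hadj)
    obtain ⟨p⟩ := hconn.preconnected a b
    obtain ⟨c, d, hcd, hc, hd⟩ := cross_lemma _ (fun x => (lvl x).val ≤ (i : ℕ)) p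
      (le_of_eq (congrArg Fin.val hla))
      (by show ¬ ((lvl b : ℕ) ≤ (i : ℕ)); rw [hlb]; omega)
    obtain ⟨hGcd, hne_e⟩ := SimpleGraph.deleteEdges_adj.mp hcd
    have hc' : ((lvl c : ℕ)) ≤ (i : ℕ) := hc
    have hd' : ¬ ((lvl d : ℕ)) ≤ (i : ℕ) := hd
    rcases hadjlvl c d hGcd with h | h | h
    · exact hd' (h ▸ hc')
    · have hci : lvl c = i := Fin.ext (by omega)
      have hdj : lvl d = j := Fin.ext (by omega)
      have hca : c = a := hmema c hci
      have hdb : d = b := hmemb d hdj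
      rw [hca, hdb] at hne_e
      exact hne_e rfl
    · omega
  -- counting small parts
  have hS1 : ∀ i ∈ S, (F i).card = 1 := by
    intro i hi
    have h1 := hFpos i
    have h2'' := (Finset.mem_filter.mp hi).2
    omega
  have hall : ∀ i : Fin r, i ∈ B ∨ i ∈ S := by
    intro i
    by_cases h : 2 ≤ (F i).card
    · exact Or.inl (Finset.mem_filter.mpr ⟨Finset.mem_univ i, h⟩)
    · exact Or.inr (Finset.mem_filter.mpr ⟨Finset.mem_univ i, h⟩)
  set f : Fin r → Fin r := fun i => ⟨(i : ℕ) - 1, Nat.lt_of_le_of_lt (Nat.sub_le _ _) i.isLt⟩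
    with hfdef
  set S' : Finset (Fin r) := S.filter (fun i => (i : ℕ) ≠ 0) with hS'def
  have hS'B : S'.card ≤ B.card := by
    refine Finset.card_le_card_of_injOn f ?_ ?_
    · intro i hi
      obtain ⟨hiS, hi0⟩ := Finset.mem_filter.mp hi
      rcases hall (f i) with h | h
      · exact h
      · exfalso
        refine hA (f i) i ?_ (hS1 _ h) (hS1 _ hiS)
        show (i : ℕ) - 1 + 1 = (i : ℕ)
        omega
    · intro x hx y hy hxy
      obtain ⟨-, hx0⟩ := Finset.mem_filter.mp (Finset.mem_coe.mp hx)
      obtain ⟨-, hy0⟩ := Finset.mem_filter.mp (Finset.mem_coe.mp hy)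
      have := congrArg Fin.val hxy
      simp only [hfdef] at this
      exact Fin.ext (by omega)
  have hr0 : 0 < r := by omega
  have hsub : S ⊆ insert (⟨0, hr0⟩ : Fin r) S' := by
    intro i hi
    by_cases h0 : (i : ℕ) = 0
    · have : i = ⟨0, hr0⟩ := Fin.ext h0
      exact this ▸ Finset.mem_insert_self _ _
    · exact Finset.mem_insert_of_mem (Finset.mem_filter.mpr ⟨hi, h0⟩)
  have hSS' : S.card ≤ S'.card + 1 :=
    le_trans (Finset.card_le_card hsub) (Finset.card_insert_le _ _)
  omega
/-- If `G` is 2-edge-connected and `|V(G)| > 3k + 1`, then `G` is not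
`k`-contractible to any path. -/
theorem stmt5 {V : Type} [Finite V] (G : SimpleGraph V) (k : ℕ)
    (h2 : TwoEdgeConnected G) (hcard : 3 * k + 1 < Nat.card V) :
    ∀ (W : Type) (P : SimpleGraph W), IsPathGraph P → ¬ KContractible G P k := by
  intro W P hP hK
  obtain ⟨r, ⟨e⟩⟩ := hP
  obtain ⟨n, hn, hc⟩ := hK
  obtain ⟨⟨Wit0, hw0⟩, hfinW, hcardeq⟩ := aux_main hc ‹Finite V›
  haveI := hfinW
  have hWr : Nat.card W = r := by
    rw [Nat.card_congr e.toEquiv, Nat.card_eq_fintype_card, Fintype.card_fin]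
  have hw : IsWitnessStructure G (SimpleGraph.pathGraph r) (fun i => Wit0 (e.symm i)) :=
    witness_of_iso G e hw0
  exact main_comb G r k _ hw h2 (by omega) (by omega)
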